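/- Let f be a coalgebra automorphism of finite order n of the matrix coalgebra M*(d,k). Then there exist a multiplicative matrix (e_ij)_{1≤i,j≤d} for M*(d,k) and nonzero scalars ω₁, …, ω_d ∈ k such that f(e_ij) = ω_i ω_j^{−1} e_ij for all i,j, and each ω_i ω_j^{−1} is an n-th root of unity. -/

import Mathlib

open TensorProduct

namespace HopfClass

variable (k : Type*) [Field k]

section Wrt

variable {M : Type*} [AddCommGroup M] [Module k M]

/-- A subspace `C` is a subcoalgebra with respect to a comultiplication-like map `Δ`
if `Δ` maps `C` into the image of `C ⊗ C` in `M ⊗ M`. -/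
def IsSubcoalgWrt (Δ : M →ₗ[k] M ⊗[k] M) (C : Submodule k M) : Prop :=
  ∀ x ∈ C, Δ x ∈ LinearMap.range (TensorProduct.map C.subtype C.subtype)

/-- A simple subcoalgebra: a nonzero subcoalgebra with no nonzero proper subcoalgebras. -/
def IsSimpleSubcoalgWrt (Δ : M →ₗ[k] M ⊗[k] M) (C : Submodule k M) : Prop :=
  IsSubcoalgWrt k Δ C ∧ C ≠ ⊥ ∧
    ∀ D : Submodule k M, IsSubcoalgWrt k Δ D → D < C → D = ⊥

/-- Pointedness: every simple subcoalgebra is one-dimensional. -/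
def IsPointedWrt (Δ : M →ₗ[k] M ⊗[k] M) : Prop :=
  ∀ C : Submodule k M, IsSimpleSubcoalgWrt k Δ C → Module.finrank k C = 1

/-- Grouplike element with respect to `Δ`. -/
def IsGrouplikeWrt (Δ : M →ₗ[k] M ⊗[k] M) (g : M) : Prop :=
  g ≠ 0 ∧ Δ g = g ⊗ₜ[k] g

/-- `y` is a `(h, g)`-skew-primitive with respect to `Δ`, i.e. `Δ y = g ⊗ y + y ⊗ h`. -/
def IsSkewPrimitiveWrt (Δ : M →ₗ[k] M ⊗[k] M) (g h y : M) : Prop :=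
  Δ y = g ⊗ₜ[k] y + y ⊗ₜ[k] h

/-- There are no nontrivial skew-primitive elements: every skew-primitive between grouplikes
is a scalar multiple of the difference of the grouplikes. -/
def HasNoNontrivialSkewPrimitivesWrt (Δ : M →ₗ[k] M ⊗[k] M) : Prop :=
  ∀ g h y : M, IsGrouplikeWrt k Δ g → IsGrouplikeWrt k Δ h →
    IsSkewPrimitiveWrt k Δ g h y → ∃ c : k, y = c • (g - h)

end Wrt

section Coalg

variable (H : Type*) [AddCommGroup H] [Module k H] [Coalgebra k H]

/-- The comultiplication of a coalgebra, as a linear map. -/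
noncomputable abbrev comulL : H →ₗ[k] H ⊗[k] H := CoalgebraStruct.comul

/-- The coradical of a coalgebra: the sum of all its simple subcoalgebras. -/
noncomputable def coradical : Submodule k H :=
  sSup {C : Submodule k H | IsSimpleSubcoalgWrt k (comulL k H) C}

/-- A coalgebra is cosemisimple if it equals its coradical. -/
def IsCosemisimple : Prop := coradical k H = ⊤

/-- A coalgebra is pointed if all its simple subcoalgebras are one-dimensional. -/
def IsPointed : Prop := IsPointedWrt k (comulL k H)

/-- The set of grouplike elements. -/
def grouplikes : Set H := {g : H | IsGrouplikeWrt k (comulL k H) g}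

/-- `e` is a multiplicative matrix of size `n` spanning the subspace `C`, i.e. a
linearly independent family with `Δ(e i j) = ∑ l, e i l ⊗ e l j` and `ε(e i j) = δ_ij`
whose span is `C`; this says precisely that `C` is a simple matrix subcoalgebra
isomorphic to `M*(n,k)`, the dual of the `n × n` matrix algebra. -/
def IsMultMatrix (n : ℕ) (C : Submodule k H) (e : Fin n → Fin n → H) : Prop :=
  LinearIndependent k (fun p : Fin n × Fin n => e p.1 p.2) ∧
  C = Submodule.span k (Set.range fun p : Fin n × Fin n => e p.1 p.2) ∧
  (∀ i j, CoalgebraStruct.comul (R := k) (e i j) = ∑ l : Fin n, e i l ⊗ₜ[k] e l j) ∧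
  (∀ i j, Coalgebra.counit (R := k) (e i j) = if i = j then (1 : k) else 0)

/-- `C` is a (simple matrix) subcoalgebra isomorphic to the matrix coalgebra `M*(n,k)`. -/
def IsMatrixSubcoalg (n : ℕ) (C : Submodule k H) : Prop :=
  ∃ e : Fin n → Fin n → H, IsMultMatrix k H n C e

end Coalg

section Dual

variable (H : Type*) [Ring H] [Algebra k H] [FiniteDimensional k H]

/-- The comultiplication on the dual of a finite-dimensional algebra:
the dual map of the multiplication, composed with the canonical identification
`(H ⊗ H)* ≃ H* ⊗ H*`. -/
noncomputable def dualComul :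
    Module.Dual k H →ₗ[k] Module.Dual k H ⊗[k] Module.Dual k H :=
  (TensorProduct.dualDistribEquiv k H H).symm.toLinearMap ∘ₗ
    (LinearMap.mul' k H).dualMap

/-- A finite-dimensional Hopf algebra is copointed if its dual is pointed. -/
def IsCopointed : Prop := IsPointedWrt k (dualComul k H)

/-- The grouplike elements of the dual Hopf algebra. -/
def dualGrouplikes : Set (Module.Dual k H) :=
  {f : Module.Dual k H | IsGrouplikeWrt k (dualComul k H) f}

end Dual

section Taft

variable (p : ℕ) (q : k)

/-- `B` is (isomorphic to) the Taft Hopf algebra `T_q` of dimension `p²`: `q` is a primitive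
`p`-th root of unity, `B` has dimension `p²` and is generated as an algebra by a grouplike `g`
and a `(1,g)`-skew-primitive `x` with `g^p = 1`, `x^p = 0` and `g x = q x g`. -/
def IsTaftAlgebra (B : Type*) [Ring B] [Bialgebra k B] : Prop :=
  IsPrimitiveRoot q p ∧ Module.finrank k B = p ^ 2 ∧
  ∃ g x : B,
    IsGrouplikeWrt k (comulL k B) g ∧
    CoalgebraStruct.comul (R := k) x = x ⊗ₜ[k] (1 : B) + g ⊗ₜ[k] x ∧
    g ^ p = 1 ∧ x ^ p = 0 ∧ g * x = q • (x * g) ∧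
    Algebra.adjoin k {g, x} = (⊤ : Subalgebra k B)

variable {H : Type*} [Ring H] [Bialgebra k H]

/-- The subalgebra `T` of `H` is a sub-Hopf algebra isomorphic to the Taft algebra `T_q` of
dimension `p²`, generated by a grouplike `g` and a `(1,g)`-skew-primitive `x` satisfying the
Taft relations. -/
def IsTaftSubalgebra (T : Subalgebra k H) : Prop :=
  IsPrimitiveRoot q p ∧ Module.finrank k T = p ^ 2 ∧
  ∃ g x : H,
    IsGrouplikeWrt k (comulL k H) g ∧
    CoalgebraStruct.comul (R := k) x = x ⊗ₜ[k] (1 : H) + g ⊗ₜ[k] x ∧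
    g ^ p = 1 ∧ x ^ p = 0 ∧ g * x = q • (x * g) ∧
    Algebra.adjoin k {g, x} = T

/-- The right coinvariants `H^{co π}` of a linear map `π : H → B` on a bialgebra `H`:
elements `h` with `(id ⊗ π)(Δ h) = h ⊗ 1`. -/
def rightCoinvariants {B : Type*} [Ring B] [Bialgebra k B] (π : H →ₗ[k] B) : Set H :=
  {h : H | (TensorProduct.map LinearMap.id π) (CoalgebraStruct.comul (R := k) h)
      = h ⊗ₜ[k] (1 : B)}

end Taft

end HopfClass

/-! The convolution algebra dual to `M*(d,k)` is the matrix algebra `M_d(k)`, and the coalgebra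
automorphism `f` dualizes to an algebra automorphism of it, which by Skolem–Noether is conjugation
by some invertible `U`. As `f ^ n = 1`, the matrix `U ^ n` is central, hence a nonzero scalar `a`,
and since `X ^ n - a` is separable, `U` is diagonalizable: `U P = P diag(ω)` with `ω_i ^ n = a`.
Dualizing the matrix units back along `A ↦ P A P⁻¹` gives a new multiplicative matrix `e`, and
`f` acts on `e i j` by the eigenvalue `ω_i ω_j⁻¹` of conjugation by `diag(ω)` on the matrix unit. -/

open TensorProduct WithConv Coalgebra LinearMap HopfClass

section Convolution

variable {R A C C' : Type*} [CommSemiring R] [Semiring A] [Algebra R A]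
  [AddCommMonoid C] [Module R C] [Coalgebra R C] [AddCommMonoid C'] [Module R C'] [Coalgebra R C']

noncomputable def CoalgHom.convPrecomp (f : C →ₗc[R] C') :
    WithConv (C' →ₗ[R] A) →ₐ[R] WithConv (C →ₗ[R] A) :=
  AlgHom.ofLinearMap
    ((WithConv.linearEquiv R _).symm.toLinearMap ∘ₗ lcomp R A f.toLinearMap ∘ₗ
      (WithConv.linearEquiv R _).toLinearMap)
    (by ext; simp)
    (fun φ ψ => by ext x; simp [← CoalgHomClass.map_comp_comul_apply, map_map, lcomp_apply'])

@[simp] lemma CoalgHom.convPrecomp_apply (f : C →ₗc[R] C') (φ : WithConv (C' →ₗ[R] A)) (x : C) :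
    f.convPrecomp φ x = φ (f x) := rfl

noncomputable def CoalgEquiv.convPrecomp (f : C ≃ₗc[R] C') :
    WithConv (C' →ₗ[R] A) ≃ₐ[R] WithConv (C →ₗ[R] A) :=
  AlgEquiv.ofAlgHom (f : C →ₗc[R] C').convPrecomp (f.symm : C' →ₗc[R] C).convPrecomp
    (by ext φ x; simp) (by ext φ x; simp)

@[simp] lemma CoalgEquiv.convPrecomp_apply (f : C ≃ₗc[R] C') (φ : WithConv (C' →ₗ[R] A)) (x : C) :
    f.convPrecomp φ x = φ (f x) := rfl

end Convolution

section Separation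

variable {k V W : Type*} [Field k] [AddCommGroup V] [Module k V] [FiniteDimensional k V]
  [AddCommGroup W] [Module k W] [FiniteDimensional k W]

lemma TensorProduct.ext_of_forall_dual {t t' : V ⊗[k] W}
    (h : ∀ (φ : Module.Dual k V) (ψ : Module.Dual k W),
      mul' k k (map φ ψ t) = mul' k k (map φ ψ t')) :
    t = t' := by
  rw [← sub_eq_zero, ← Module.forall_dual_apply_eq_zero_iff k]
  intro χ
  obtain ⟨x, rfl⟩ := (dualDistribEquiv k V W).surjective χ
  induction x using TensorProduct.induction_on with
  | zero => simp
  | tmul φ ψ =>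
    have hφψ : dualDistribEquiv k V W (φ ⊗ₜ ψ) = mul' k k ∘ₗ map φ ψ := ext' fun v w => by simp
    rw [hφψ, map_sub, sub_eq_zero]
    exact h φ ψ
  | add x y hx hy => simp only [map_add, LinearMap.add_apply, hx, hy, add_zero]

end Separation

namespace Matrix

variable {n k : Type*} [Fintype n] [DecidableEq n] [Field k]

open ConjAct in
lemma exists_eq_conj_of_algEquiv (g : Matrix n n k ≃ₐ[k] Matrix n n k) :
    ∃ U : GL n k, ∀ A, g A = toConjAct U • A := by
  obtain ⟨T, hT⟩ :=
    ((toLinAlgEquiv'.symm.trans g).trans toLinAlgEquiv').eq_linearEquivConjAlgEquiv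
  let U : GL n k := ⟨LinearMap.toMatrixAlgEquiv' T, LinearMap.toMatrixAlgEquiv' T.symm,
    by simp [← map_mul, Module.End.mul_eq_comp], by simp [← map_mul, Module.End.mul_eq_comp]⟩
  refine ⟨U, fun A => toLinAlgEquiv'.injective ?_⟩
  have h := AlgEquiv.congr_fun hT (toLinAlgEquiv' A)
  simp only [AlgEquiv.trans_apply, AlgEquiv.symm_apply_apply,
    LinearEquiv.conjAlgEquiv_apply] at h
  simp [h, U, units_smul_def, Module.End.mul_eq_comp, LinearMap.comp_assoc]

lemma exists_mul_eq_mul_diagonal_of_isSemisimple [IsAlgClosed k] {U : Matrix n n k}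
    (hU : Module.End.IsSemisimple (toLinAlgEquiv' U)) :
    ∃ (P : GL n k) (ω : n → k), U * P = P * diagonal ω := by
  classical
  have hint : DirectSum.IsInternal fun μ => Module.End.eigenspace (toLinAlgEquiv' U) μ :=
    DirectSum.isInternal_submodule_of_iSupIndep_of_iSup_eq_top
      (Module.End.eigenspaces_iSupIndep (toLinAlgEquiv' U)) hU.iSup_eigenspace_eq_top
  let b₀ := hint.collectedBasis fun μ => Module.Free.chooseBasis k _
  let σ := b₀.indexEquiv (Pi.basisFun k n)
  let b := b₀.reindex σ
  let ω : n → k := fun i => (σ.symm i).1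
  have hb (i : n) : U *ᵥ b i = ω i • b i := by
    have := Module.End.mem_eigenspace_iff.mp
      (hint.collectedBasis_mem (fun μ => Module.Free.chooseBasis k _) (σ.symm i))
    rwa [toLinAlgEquiv'_apply, ← Module.Basis.reindex_apply b₀ σ] at this
  let P : GL n k := ⟨(Pi.basisFun k n).toMatrix b, b.toMatrix (Pi.basisFun k n),
    Module.Basis.toMatrix_mul_toMatrix_flip _ _, Module.Basis.toMatrix_mul_toMatrix_flip _ _⟩
  refine ⟨P, ω, ?_⟩
  ext i j
  have := congrFun (hb j) i
  simp only [mulVec, dotProduct, Pi.smul_apply, smul_eq_mul] at this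
  rw [mul_diagonal, mul_apply]
  simp only [P, Module.Basis.toMatrix_apply, Pi.basisFun_repr]
  rw [this, mul_comm]

open Polynomial in
lemma isSemisimple_of_pow_eq_scalar {U : Matrix n n k} {m : ℕ} {a : k} (hm : (m : k) ≠ 0)
    (ha : a ≠ 0) (hU : U ^ m = scalar n a) : Module.End.IsSemisimple (toLinAlgEquiv' U) :=
  Module.End.isSemisimple_of_squarefree_aeval_eq_zero (separable_X_pow_sub_C a hm ha).squarefree
    (by rw [map_sub, aeval_X_pow, aeval_C, ← map_pow, hU, sub_eq_zero,
      ← (toLinAlgEquiv' : Matrix n n k ≃ₐ[k] _).commutes]; rfl)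

lemma exists_mul_eq_mul_diagonal_of_pow_eq_scalar [IsAlgClosed k] {U : Matrix n n k} {m : ℕ}
    {a : k} (hm : (m : k) ≠ 0) (ha : a ≠ 0) (hU : U ^ m = scalar n a) :
    ∃ (P : GL n k) (ω : n → k), U * P = P * diagonal ω ∧ ∀ i, ω i ^ m = a := by
  obtain ⟨P, ω, hUP⟩ :=
    exists_mul_eq_mul_diagonal_of_isSemisimple (isSemisimple_of_pow_eq_scalar hm ha hU)
  refine ⟨P, ω, hUP, fun i => ?_⟩
  have := (SemiconjBy.pow_right (hUP.symm : SemiconjBy (P : Matrix n n k) _ _) m).eq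
  rw [hU, diagonal_pow, scalar_commute a (Commute.all _), Units.mul_right_inj] at this
  simpa using congrFun₂ this i i

end Matrix

namespace HopfClass.IsMultMatrix

variable {k D : Type*} [Field k] [AddCommGroup D] [Module k D] [Coalgebra k D] {d : ℕ}
  {c : Fin d → Fin d → D}

noncomputable def basis (hc : IsMultMatrix k D d ⊤ c) : Module.Basis (Fin d × Fin d) k D :=
  .mk hc.1 hc.2.1.le

lemma basis_apply (hc : IsMultMatrix k D d ⊤ c) (p : Fin d × Fin d) :
    hc.basis p = c p.1 p.2 :=
  Module.Basis.mk_apply _ _ p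

lemma finiteDimensional (hc : IsMultMatrix k D d ⊤ c) : FiniteDimensional k D :=
  .of_basis hc.basis

noncomputable def dualLinearEquiv (hc : IsMultMatrix k D d ⊤ c) :
    Matrix (Fin d) (Fin d) k ≃ₗ[k] WithConv (D →ₗ[k] k) :=
  (Matrix.ofLinearEquiv k).symm ≪≫ₗ (LinearEquiv.curry k k _ _).symm ≪≫ₗ
    hc.basis.constr k ≪≫ₗ (WithConv.linearEquiv k _).symm

lemma dualLinearEquiv_apply (hc : IsMultMatrix k D d ⊤ c) (A : Matrix (Fin d) (Fin d) k)
    (i j : Fin d) : hc.dualLinearEquiv A (c i j) = A i j := by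
  rw [← hc.basis_apply (i, j)]
  simp [dualLinearEquiv, -Module.Basis.constr_apply_fintype]

noncomputable def dualAlgEquiv (hc : IsMultMatrix k D d ⊤ c) :
    Matrix (Fin d) (Fin d) k ≃ₐ[k] WithConv (D →ₗ[k] k) :=
  .ofLinearEquiv hc.dualLinearEquiv
    (WithConv.ext <| hc.basis.ext fun p => by
      rw [hc.basis_apply, hc.dualLinearEquiv_apply, Matrix.one_apply, ← hc.2.2.2]; rfl)
    (fun A B => WithConv.ext <| hc.basis.ext fun p => by
      rw [hc.basis_apply, hc.dualLinearEquiv_apply, Matrix.mul_apply]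
      simp [hc.2.2.1, hc.dualLinearEquiv_apply])

end HopfClass.IsMultMatrix

namespace AlgEquiv

open ConjAct Matrix

variable {k D : Type*} [Field k] [AddCommGroup D] [Module k D] [Coalgebra k D] {d : ℕ}
  (Φ : Matrix (Fin d) (Fin d) k ≃ₐ[k] WithConv (D →ₗ[k] k))

section FiniteDimensional

variable [FiniteDimensional k D]

noncomputable def predualEntry (i j : Fin d) : D :=
  (Module.evalEquiv k D).symm
    (entryLinearMap k k i j ∘ₗ Φ.symm.toLinearMap ∘ₗ (WithConv.linearEquiv k _).symm.toLinearMap)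

lemma apply_predualEntry (A : Matrix (Fin d) (Fin d) k) (i j : Fin d) :
    Φ A (Φ.predualEntry i j) = A i j := by
  simp [predualEntry]

lemma eq_of_forall_apply_eq {x y : D} (h : ∀ A, Φ A x = Φ A y) : x = y := by
  rw [← sub_eq_zero, ← Module.forall_dual_apply_eq_zero_iff k]
  intro φ
  simpa [sub_eq_zero] using h (Φ.symm (toConv φ))

lemma isMultMatrix_predualEntry : IsMultMatrix k D d ⊤ Φ.predualEntry := by
  have hΦ (φ : D →ₗ[k] k) : ∃ A, (Φ A).ofConv = φ := ⟨Φ.symm (toConv φ), by simp⟩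
  have hind : LinearIndependent k fun p : Fin d × Fin d => Φ.predualEntry p.1 p.2 := by
    refine Fintype.linearIndependent_iff.mpr fun g hg p => ?_
    simpa [apply_predualEntry, Matrix.single_apply, ← Prod.ext_iff] using
      congr(Φ (single p.1 p.2 1) $hg)
  have hcard : Fintype.card (Fin d × Fin d) = Module.finrank k D := by
    rw [← Subspace.dual_finrank_eq, ← (WithConv.linearEquiv k _).finrank_eq,
      ← Φ.toLinearEquiv.finrank_eq]
    simp [Module.finrank_matrix]
  refine ⟨hind, (hind.span_eq_top_of_card_eq_finrank' hcard).symm, fun i j => ?_, fun i j => ?_⟩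
  · refine TensorProduct.ext_of_forall_dual fun φ ψ => ?_
    obtain ⟨A, rfl⟩ := hΦ φ
    obtain ⟨B, rfl⟩ := hΦ ψ
    calc mul' k k (map (Φ A).ofConv (Φ B).ofConv (comul (Φ.predualEntry i j)))
        = Φ (A * B) (Φ.predualEntry i j) := by rw [map_mul, convMul_apply]
      _ = ∑ l, Φ A (Φ.predualEntry i l) * Φ B (Φ.predualEntry l j) := by
        simp only [apply_predualEntry, Matrix.mul_apply]
      _ = _ := by simp
  · calc counit (Φ.predualEntry i j) = Φ 1 (Φ.predualEntry i j) := by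
          rw [map_one, convOne_apply, Algebra.algebraMap_self, RingHom.id_apply]
      _ = _ := by rw [apply_predualEntry, Matrix.one_apply]

end FiniteDimensional

lemma exists_apply_coalgEquiv_eq_conj (F : D ≃ₗc[k] D) :
    ∃ U : GL (Fin d) k, ∀ A x, Φ A (F x) = Φ (toConjAct U • A) x := by
  obtain ⟨U, hU⟩ := Matrix.exists_eq_conj_of_algEquiv ((Φ.trans F.convPrecomp).trans Φ.symm)
  exact ⟨U, fun A x => by simp [← hU]⟩

variable {Φ} {f : Module.End k D} {U : GL (Fin d) k}

lemma apply_pow_eq_conj (hU : ∀ A x, Φ A (f x) = Φ (toConjAct U • A) x) (m : ℕ)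
    (A : Matrix (Fin d) (Fin d) k) (x : D) :
    Φ A ((f ^ m) x) = Φ (toConjAct (U ^ m) • A) x := by
  induction m generalizing A x with
  | zero => simp
  | succ m ih => rw [pow_succ, Module.End.mul_apply, ih, hU, pow_succ', map_mul, mul_smul]

lemma exists_pow_eq_scalar (hU : ∀ A x, Φ A (f x) = Φ (toConjAct U • A) x) {m : ℕ}
    (hf : f ^ m = 1) : ∃ a : kˣ, (U : Matrix (Fin d) (Fin d) k) ^ m = scalar (Fin d) (a : k) := by
  have hfix (A : Matrix (Fin d) (Fin d) k) : toConjAct (U ^ m) • A = A :=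
    Φ.injective <| WithConv.ext <| LinearMap.ext fun x => by
      rw [← apply_pow_eq_conj hU, hf, Module.End.one_apply]
  have hc : U ^ m ∈ Subgroup.center (GL (Fin d) k) := by
    refine Subgroup.mem_center_iff.mpr fun g => Units.ext ?_
    have := hfix g
    rw [units_smul_def, ofConjAct_toConjAct, Units.mul_inv_eq_iff_eq_mul] at this
    exact this.symm
  rw [GeneralLinearGroup.center_eq_range_scalar] at hc
  obtain ⟨a, ha⟩ := hc
  exact ⟨a, by rw [← Units.val_pow_eq_pow_val, ← ha]; rfl⟩

lemma apply_predualEntry_eq_smul [FiniteDimensional k D]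
    (hU : ∀ A x, Φ A (f x) = Φ (toConjAct U • A) x) {P : GL (Fin d) k} {ω : Fin d → k}
    (hUP : (U : Matrix (Fin d) (Fin d) k) * P = P * diagonal ω) (hω : ∀ i, ω i ≠ 0)
    (i j : Fin d) :
    let Ψ := (MulSemiringAction.toAlgEquiv k _ (toConjAct P)).trans Φ
    f (Ψ.predualEntry i j) = (ω i * (ω j)⁻¹) • Ψ.predualEntry i j := by
  intro Ψ
  have hΨ (B : Matrix (Fin d) (Fin d) k) : Ψ B = Φ (toConjAct P • B) := rfl
  let Ω : GL (Fin d) k := ⟨diagonal ω, diagonal ω⁻¹, by simp [hω], by simp [hω]⟩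
  have hconj (A : Matrix (Fin d) (Fin d) k) :
      toConjAct U • toConjAct P • A = toConjAct P • toConjAct Ω • A := by
    rw [← mul_smul, ← map_mul, ← mul_smul, ← map_mul, show U * P = P * Ω from Units.ext hUP]
  refine Ψ.eq_of_forall_apply_eq fun A => ?_
  rw [hΨ, hU, hconj, ← hΨ, apply_predualEntry, map_smul, ← hΨ, apply_predualEntry]
  simp [Ω, units_smul_def, diagonal_mul, mul_diagonal]
  ring

end AlgEquiv

open HopfClass in
/-- Let `f` be a coalgebra automorphism of finite order `n` of the matrix coalgebra `M*(d,k)`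
(a coalgebra `D` with a multiplicative matrix basis of size `d`). Then there are a
multiplicative matrix `(e i j)` for `D` and nonzero scalars `ω₁, …, ω_d` with
`f (e i j) = ω_i ω_j⁻¹ • e i j` for all `i, j`, and each `ω_i ω_j⁻¹` is an `n`-th root
of unity. -/
theorem matrix_coalgebra_automorphism_diagonalizable
    (k : Type*) [Field k] [IsAlgClosed k] [CharZero k]
    (D : Type*) [AddCommGroup D] [Module k D] [Coalgebra k D]
    (d : ℕ) (hD : IsMatrixSubcoalg k D d (⊤ : Submodule k D))
    (f : Module.End k D)
    (hf_comul : comulL k D ∘ₗ f = TensorProduct.map f f ∘ₗ comulL k D)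
    (hf_counit : (Coalgebra.counit : D →ₗ[k] k) ∘ₗ f = Coalgebra.counit)
    (hf_bij : Function.Bijective f)
    (n : ℕ) (hn : 0 < n) (horder : orderOf f = n) :
    ∃ e : Fin d → Fin d → D, IsMultMatrix k D d (⊤ : Submodule k D) e ∧
      ∃ ω : Fin d → k, (∀ i, ω i ≠ 0) ∧
        (∀ i j, f (e i j) = (ω i * (ω j)⁻¹) • e i j) ∧
        (∀ i j, (ω i * (ω j)⁻¹) ^ n = 1) := by
  obtain ⟨c, hc⟩ := hD
  have := hc.finiteDimensional
  let F : D ≃ₗc[k] D :=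
    .ofBijective (f := (⟨f, hf_counit, hf_comul.symm⟩ : D →ₗc[k] D)) hf_bij
  obtain ⟨U, hU⟩ := hc.dualAlgEquiv.exists_apply_coalgEquiv_eq_conj F
  obtain ⟨a, hUa⟩ := AlgEquiv.exists_pow_eq_scalar hU (horder ▸ pow_orderOf_eq_one f)
  obtain ⟨P, ω, hUP, hωa⟩ := Matrix.exists_mul_eq_mul_diagonal_of_pow_eq_scalar
    (Nat.cast_ne_zero.mpr hn.ne') a.ne_zero hUa
  have hω (i : Fin d) : ω i ≠ 0 := fun h => a.ne_zero (by rw [← hωa i, h, zero_pow hn.ne'])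
  exact ⟨_, AlgEquiv.isMultMatrix_predualEntry _, ω, hω,
    AlgEquiv.apply_predualEntry_eq_smul hU hUP hω,
    fun i j => by rw [mul_pow, inv_pow, hωa, hωa, mul_inv_cancel₀ a.ne_zero]⟩
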